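/- Let n ≥ 2 be an integer and let i be an integer with 0 ≤ i ≤ n−2. Define the 4×4 matrix u over T = k[x,y,z] with rows (x, 0, −z^{n−i−1}, y), (0, x, y, z^{i+1}), (−z^{i+1}, y, −x, 0), (y, z^{n−i−1}, 0, −x). Then u·u = (x² + y² + zⁿ)·I₄, i.e., (u,u) is a symmetric matrix factorization of x² + y² + zⁿ. -/
import Mathlib


open MvPolynomial

/-- The symmetric matrix of Proposition `prop:mf:22n` representing the
indecomposable rank-two bundle `E_i` for weight type `(2,2,n)`. -/
noncomputable def uE22n (k : Type*) [Field k] (n i : ℕ) :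
    Matrix (Fin 4) (Fin 4) (MvPolynomial (Fin 3) k) :=
  let x : MvPolynomial (Fin 3) k := X 0
  let y : MvPolynomial (Fin 3) k := X 1
  let z : MvPolynomial (Fin 3) k := X 2
  !![x, 0, -z ^ (n - i - 1), y;
     0, x, y, z ^ (i + 1);
     -z ^ (i + 1), y, -x, 0;
     y, z ^ (n - i - 1), 0, -x]

theorem stmt_2 (k : Type*) [Field k] (n i : ℕ) (hn : 2 ≤ n) (hi : i ≤ n - 2) :
    uE22n k n i * uE22n k n i =
      (((X 0 : MvPolynomial (Fin 3) k) ^ 2 + (X 1) ^ 2 + (X 2) ^ n)) •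
        (1 : Matrix (Fin 4) (Fin 4) (MvPolynomial (Fin 3) k)) := by
  have h : (n - i - 1) + (i + 1) = n := by omega
  have h2 : (X 2 : MvPolynomial (Fin 3) k) ^ n = X 2 ^ (n - i - 1) * X 2 ^ (i + 1) := by
    rw [← pow_add, h]
  rw [uE22n]
  ext a b
  fin_cases a <;> fin_cases b <;>
    simp [Matrix.mul_apply, Fin.sum_univ_succ, Matrix.one_apply, h2] <;> ring
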